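/- ACD supremum formula for α > 1 (finite case): for a probability mass function θ on a finite set S and any g : S → ℝ, (1/α) log ∑_x e^{α g(x)} θ(x) equals the supremum over probability mass functions ν with ν ⪯ θ of ((1/(α−1)) log ∑_x e^{(α−1) g(x)} ν(x) − R_α(ν‖θ)). -/

import Mathlib

/-!
Hölder's inequality with the conjugate exponents `α / (α - 1)` and `α`, applied to
`e^{(α-1) g} θ^{(α-1)/α}` and `ν θ^{(1-α)/α}`, gives
`∑ e^{(α-1) g} ν ≤ (∑ e^{α g} θ)^{(α-1)/α} (∑ ν^α θ^{1-α})^{1/α}`; taking logarithms this is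
exactly the upper bound. Equality holds for the tilted distribution `ν ∝ e^g θ`, for which both
sums are multiples of `∑ e^{α g} θ`.
-/

open Finset Real

variable {S : Type*} [Fintype S]

noncomputable def renyiDivergence (α : ℝ) (ν θ : S → ℝ) : ℝ :=
  1 / (α * (α - 1)) *
    log (∑ x ∈ univ.filter (fun x => 0 < ν x * θ x), ν x ^ α * θ x ^ (1 - α))

noncomputable def tilt (g θ : S → ℝ) (x : S) : ℝ :=
  exp (g x) * θ x / ∑ y, exp (g y) * θ y

lemma sum_exp_mul_pos (c : S → ℝ) {θ : S → ℝ} (hθ : ∀ x, 0 ≤ θ x) (hθpos : 0 < ∑ x, θ x) :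
    0 < ∑ x, exp (c x) * θ x := by
  obtain ⟨x, -, hx⟩ := (sum_pos_iff_of_nonneg fun x _ => hθ x).1 hθpos
  exact sum_pos' (fun y _ => mul_nonneg (exp_pos _).le (hθ y)) ⟨x, mem_univ x, by positivity⟩

lemma sum_filter_mul_pos_eq_sum {ν θ f : S → ℝ} (hν : ∀ x, 0 ≤ ν x) (hθ : ∀ x, 0 ≤ θ x)
    (hνθ : ∀ x, θ x = 0 → ν x = 0) (hf : ∀ x, ν x = 0 → f x = 0) :
    ∑ x ∈ univ.filter (fun x => 0 < ν x * θ x), f x = ∑ x, f x := by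
  refine sum_filter_of_ne fun x _ hfx => ?_
  have hνx : ν x ≠ 0 := fun h => hfx (hf x h)
  exact mul_pos ((hν x).lt_of_ne' hνx) ((hθ x).lt_of_ne' fun h => hνx (hνθ x h))

lemma sum_exp_mul_le_rpow_mul_rpow {α : ℝ} (hα : 1 < α) (g : S → ℝ) {ν θ : S → ℝ}
    (hν : ∀ x, 0 ≤ ν x) (hθ : ∀ x, 0 ≤ θ x) (hνθ : ∀ x, θ x = 0 → ν x = 0) :
    ∑ x, exp ((α - 1) * g x) * ν x ≤
      (∑ x, exp (α * g x) * θ x) ^ ((α - 1) / α) * (∑ x, ν x ^ α * θ x ^ (1 - α)) ^ (1 / α) := by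
  have hα0 : α ≠ 0 := (zero_lt_one.trans hα).ne'
  have hα1 : α - 1 ≠ 0 := sub_ne_zero.2 hα.ne'
  have holder := inner_le_Lp_mul_Lq_of_nonneg univ (HolderConjugate.conjExponent hα).symm
    (f := fun x => exp ((α - 1) * g x) * θ x ^ ((α - 1) / α))
    (g := fun x => ν x * θ x ^ ((1 - α) / α))
    (fun x _ => mul_nonneg (exp_pos _).le (rpow_nonneg (hθ x) _))
    (fun x _ => mul_nonneg (hν x) (rpow_nonneg (hθ x) _))
  have hprod : ∀ x, exp ((α - 1) * g x) * θ x ^ ((α - 1) / α) * (ν x * θ x ^ ((1 - α) / α))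
      = exp ((α - 1) * g x) * ν x := by
    intro x
    rcases (hθ x).eq_or_lt with h | h
    · simp [← h, hνθ x h.symm]
    · rw [mul_mul_mul_comm, ← rpow_add h, ← add_div, sub_add_sub_cancel, sub_self, zero_div, rpow_zero,
        mul_one]
  have hfst : ∀ x, (exp ((α - 1) * g x) * θ x ^ ((α - 1) / α)) ^ conjExponent α
      = exp (α * g x) * θ x := by
    intro x
    rw [conjExponent, mul_rpow (exp_pos _).le (rpow_nonneg (hθ x) _), ← exp_mul,
      ← rpow_mul (hθ x), show (α - 1) / α * (α / (α - 1)) = 1 by field_simp, rpow_one]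
    congr 2
    field_simp
  have hsnd : ∀ x, (ν x * θ x ^ ((1 - α) / α)) ^ α = ν x ^ α * θ x ^ (1 - α) := by
    intro x
    rw [mul_rpow (hν x) (rpow_nonneg (hθ x) _), ← rpow_mul (hθ x), div_mul_cancel₀ _ hα0]
  simp only [hprod, hfst, hsnd] at holder
  rwa [conjExponent, one_div_div] at holder

lemma renyiDivergence_eq_of_absolutelyContinuous {α : ℝ} (hα : α ≠ 0) {ν θ : S → ℝ}
    (hν : ∀ x, 0 ≤ ν x) (hθ : ∀ x, 0 ≤ θ x) (hνθ : ∀ x, θ x = 0 → ν x = 0) :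
    renyiDivergence α ν θ = 1 / (α * (α - 1)) * log (∑ x, ν x ^ α * θ x ^ (1 - α)) := by
  rw [renyiDivergence, sum_filter_mul_pos_eq_sum hν hθ hνθ fun x hx => by simp [hx, zero_rpow hα]]

lemma log_sum_exp_mul_sub_renyiDivergence_le {α : ℝ} (hα : 1 < α) (g : S → ℝ) {ν θ : S → ℝ}
    (hν : ∀ x, 0 ≤ ν x) (hν1 : ∑ x, ν x = 1) (hθ : ∀ x, 0 ≤ θ x)
    (hνθ : ∀ x, θ x = 0 → ν x = 0) :
    1 / (α - 1) * log (∑ x, exp ((α - 1) * g x) * ν x) - renyiDivergence α ν θ ≤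
      1 / α * log (∑ x, exp (α * g x) * θ x) := by
  have hα0 : 0 < α := zero_lt_one.trans hα
  have hα1 : 0 < α - 1 := sub_pos.2 hα
  obtain ⟨x₀, -, hνx₀⟩ := (sum_pos_iff_of_nonneg fun x _ => hν x).1 (hν1 ▸ one_pos)
  have hθx₀ : 0 < θ x₀ := (hθ x₀).lt_of_ne' fun h => hνx₀.ne' (hνθ x₀ h)
  have hA : 0 < ∑ x, exp ((α - 1) * g x) * ν x :=
    sum_exp_mul_pos _ hν (hν1 ▸ one_pos)
  have hZ : 0 < ∑ x, exp (α * g x) * θ x :=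
    sum_exp_mul_pos _ hθ (sum_pos' (fun x _ => hθ x) ⟨x₀, mem_univ x₀, hθx₀⟩)
  have hB : 0 < ∑ x, ν x ^ α * θ x ^ (1 - α) :=
    sum_pos' (fun x _ => mul_nonneg (rpow_nonneg (hν x) _) (rpow_nonneg (hθ x) _))
      ⟨x₀, mem_univ x₀, by positivity⟩
  have hlog : log (∑ x, exp ((α - 1) * g x) * ν x) ≤
      (α - 1) / α * log (∑ x, exp (α * g x) * θ x) +
        1 / α * log (∑ x, ν x ^ α * θ x ^ (1 - α)) := by
    calc _ ≤ log ((∑ x, exp (α * g x) * θ x) ^ ((α - 1) / α) *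
            (∑ x, ν x ^ α * θ x ^ (1 - α)) ^ (1 / α)) :=
          log_le_log hA (sum_exp_mul_le_rpow_mul_rpow hα g hν hθ hνθ)
      _ = _ := by
        rw [log_mul (rpow_pos_of_pos hZ _).ne' (rpow_pos_of_pos hB _).ne', log_rpow hZ,
          log_rpow hB]
  rw [renyiDivergence_eq_of_absolutelyContinuous hα0.ne' hν hθ hνθ]
  calc _ ≤ 1 / (α - 1) * ((α - 1) / α * log (∑ x, exp (α * g x) * θ x) +
          1 / α * log (∑ x, ν x ^ α * θ x ^ (1 - α))) -
          1 / (α * (α - 1)) * log (∑ x, ν x ^ α * θ x ^ (1 - α)) := by gcongr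
    _ = _ := by field_simp; ring

lemma tilt_nonneg (g : S → ℝ) {θ : S → ℝ} (hθ : ∀ x, 0 ≤ θ x) (x : S) : 0 ≤ tilt g θ x :=
  div_nonneg (mul_nonneg (exp_pos _).le (hθ x))
    (sum_nonneg fun y _ => mul_nonneg (exp_pos _).le (hθ y))

lemma sum_tilt (g : S → ℝ) {θ : S → ℝ} (hθ : ∀ x, 0 ≤ θ x) (hθpos : 0 < ∑ x, θ x) :
    ∑ x, tilt g θ x = 1 := by
  simp only [tilt, ← sum_div]
  exact div_self (sum_exp_mul_pos g hθ hθpos).ne'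

lemma tilt_eq_zero_of_eq_zero (g : S → ℝ) {θ : S → ℝ} {x : S} (h : θ x = 0) : tilt g θ x = 0 := by
  simp [tilt, h]

lemma sum_exp_mul_tilt (α : ℝ) (g θ : S → ℝ) :
    ∑ x, exp ((α - 1) * g x) * tilt g θ x =
      (∑ x, exp (α * g x) * θ x) / ∑ x, exp (g x) * θ x := by
  simp only [tilt, sum_div]
  refine sum_congr rfl fun x _ => ?_
  rw [← mul_div_assoc, ← mul_assoc, ← exp_add]
  ring_nf

lemma sum_tilt_rpow_mul_rpow (α : ℝ) (g : S → ℝ) {θ : S → ℝ} (hθ : ∀ x, 0 ≤ θ x) :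
    ∑ x, tilt g θ x ^ α * θ x ^ (1 - α) =
      (∑ x, exp (α * g x) * θ x) / (∑ x, exp (g x) * θ x) ^ α := by
  rw [sum_div]
  refine sum_congr rfl fun x _ => ?_
  have hW : 0 ≤ ∑ y, exp (g y) * θ y := sum_nonneg fun y _ => mul_nonneg (exp_pos _).le (hθ y)
  have hθα : θ x ^ α * θ x ^ (1 - α) = θ x := by
    rw [← rpow_add' (hθ x) (by norm_num), add_sub_cancel, rpow_one]
  rw [tilt, div_rpow (mul_nonneg (exp_pos _).le (hθ x)) hW, mul_rpow (exp_pos _).le (hθ x),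
    ← exp_mul, mul_comm (g x) α, div_mul_eq_mul_div, mul_assoc, hθα]

lemma log_sum_exp_mul_tilt_sub_renyiDivergence {α : ℝ} (hα0 : α ≠ 0) (hα1 : α ≠ 1)
    (g : S → ℝ) {θ : S → ℝ} (hθ : ∀ x, 0 ≤ θ x) (hθpos : 0 < ∑ x, θ x) :
    1 / (α - 1) * log (∑ x, exp ((α - 1) * g x) * tilt g θ x) - renyiDivergence α (tilt g θ) θ =
      1 / α * log (∑ x, exp (α * g x) * θ x) := by
  have hZ := sum_exp_mul_pos (fun x => α * g x) hθ hθpos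
  have hW := sum_exp_mul_pos g hθ hθpos
  have hα1' : α - 1 ≠ 0 := sub_ne_zero.2 hα1
  rw [renyiDivergence_eq_of_absolutelyContinuous hα0 (tilt_nonneg g hθ) hθ
      fun x => tilt_eq_zero_of_eq_zero g, sum_exp_mul_tilt, sum_tilt_rpow_mul_rpow α g hθ,
    log_div hZ.ne' hW.ne', log_div hZ.ne' (rpow_pos_of_pos hW α).ne', log_rpow hW]
  field_simp
  ring

theorem acd_sup_formula_big_alpha_general {S : Type} [Fintype S]
    (θ : S → ℝ) (g : S → ℝ) (α : ℝ) (hα : 1 < α)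
    (hθ0 : ∀ x, 0 ≤ θ x) (hθ1 : ∑ x, θ x = 1) :
    IsGreatest
      {v : ℝ | ∃ ν : S → ℝ, (∀ x, 0 ≤ ν x) ∧ (∑ x, ν x = 1) ∧
        (∀ x, θ x = 0 → ν x = 0) ∧
        v = (1 / (α - 1)) * Real.log (∑ x, Real.exp ((α - 1) * g x) * ν x) -
            (1 / (α * (α - 1))) *
              Real.log (∑ x ∈ Finset.univ.filter (fun x => 0 < ν x * θ x),
                ν x ^ α * θ x ^ (1 - α))}
      ((1 / α) * Real.log (∑ x, Real.exp (α * g x) * θ x)) := by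
  have hθpos : 0 < ∑ x, θ x := hθ1 ▸ one_pos
  refine ⟨⟨tilt g θ, tilt_nonneg g hθ0, sum_tilt g hθ0 hθpos,
    fun x => tilt_eq_zero_of_eq_zero g,
    (log_sum_exp_mul_tilt_sub_renyiDivergence (zero_lt_one.trans hα).ne' hα.ne' g hθ0
      hθpos).symm⟩, ?_⟩
  rintro v ⟨ν, hν0, hν1, hνθ, rfl⟩
  exact log_sum_exp_mul_sub_renyiDivergence_le hα g hν0 hν1 hθ0 hνθ

/-- ACD supremum formula for α > 1 (finite case): (1/α) log ∑ e^{αg} θ is the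
supremum (attained) over pmfs ν ⪯ θ of
(1/(α-1)) log ∑ e^{(α-1)g} ν - R_α(ν‖θ). -/
theorem acd_sup_formula_big_alpha {S : Type} [Fintype S] [Nonempty S]
    (θ : S → ℝ) (g : S → ℝ) (α : ℝ) (hα : 1 < α)
    (hθ0 : ∀ x, 0 ≤ θ x) (hθ1 : ∑ x, θ x = 1) :
    IsGreatest
      {v : ℝ | ∃ ν : S → ℝ, (∀ x, 0 ≤ ν x) ∧ (∑ x, ν x = 1) ∧
        (∀ x, θ x = 0 → ν x = 0) ∧
        v = (1 / (α - 1)) * Real.log (∑ x, Real.exp ((α - 1) * g x) * ν x) -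
            (1 / (α * (α - 1))) *
              Real.log (∑ x ∈ Finset.univ.filter (fun x => 0 < ν x * θ x),
                ν x ^ α * θ x ^ (1 - α))}
      ((1 / α) * Real.log (∑ x, Real.exp (α * g x) * θ x)) :=
  acd_sup_formula_big_alpha_general θ g α hα hθ0 hθ1
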